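/- arXiv:2109.03694 — 6 statements merged into one kernel-verified Lean document; each statement's English description precedes it below -/
import Mathlib

section
/- For every a, b ∈ (0,1) and every θ > 0 there exists a unique strictly positive 2×2 probability table (p₀₀, p₀₁, p₁₀, p₁₁) (positive reals summing to 1) such that p₁₀ + p₁₁ = a, p₀₁ + p₁₁ = b, and p₁₁·p₀₀/(p₁₀·p₀₁) = θ. That is, the pair of margins together with the odds ratio smoothly and bijectively parameterize strictly positive joint distributions of two binary variables, and the odds ratio is variation independent of the margins. -/
/-- For every pair of margins `a, b ∈ (0,1)` and every odds ratio `θ > 0` there is a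
unique strictly positive 2×2 probability table `(p₀₀, p₀₁, p₁₀, p₁₁)` with margins
`p₁₀ + p₁₁ = a`, `p₀₁ + p₁₁ = b` and odds ratio `p₁₁p₀₀/(p₁₀p₀₁) = θ`. -/
theorem margins_odds_ratio_parameterize_two_by_two
    (a b θ : ℝ) (ha : a ∈ Set.Ioo (0 : ℝ) 1) (hb : b ∈ Set.Ioo (0 : ℝ) 1)
    (hθ : 0 < θ) :
    ∃! p : ℝ × ℝ × ℝ × ℝ,
      0 < p.1 ∧ 0 < p.2.1 ∧ 0 < p.2.2.1 ∧ 0 < p.2.2.2 ∧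
      p.1 + p.2.1 + p.2.2.1 + p.2.2.2 = 1 ∧
      p.2.2.1 + p.2.2.2 = a ∧
      p.2.1 + p.2.2.2 = b ∧
      p.2.2.2 * p.1 / (p.2.2.1 * p.2.1) = θ := by
  obtain ⟨ha0, ha1⟩ := ha
  obtain ⟨hb0, hb1⟩ := hb
  set L : ℝ := max 0 (a + b - 1) with hL
  set U : ℝ := min a b with hU
  have hLa : L < a := max_lt ha0 (by linarith)
  have hLb : L < b := max_lt hb0 (by linarith)
  have hLU : L < U := lt_min hLa hLb
  have hL0 : (0:ℝ) ≤ L := le_max_left _ _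
  have hLab : a + b - 1 ≤ L := le_max_right _ _
  have hUa : U ≤ a := min_le_left _ _
  have hUb : U ≤ b := min_le_right _ _
  set f : ℝ → ℝ := fun t => t * (1 - a - b + t) - θ * ((a - t) * (b - t)) with hf
  have hcont : ContinuousOn f (Set.Icc L U) := by fun_prop
  have hfL : f L < 0 := by
    have hzero : L * (1 - a - b + L) = 0 := by
      rcases le_total (a + b - 1) 0 with h | h
      · have : L = 0 := max_eq_left h
        rw [this]; ring
      · have : L = a + b - 1 := max_eq_right h
        rw [this]; ring
    have hpos : 0 < θ * ((a - L) * (b - L)) :=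
      mul_pos hθ (mul_pos (by linarith) (by linarith))
    simp only [hf]; linarith
  have hfU : 0 < f U := by
    have hzero : (a - U) * (b - U) = 0 := by
      rcases le_total a b with h | h
      · have : U = a := min_eq_left h
        rw [this]; ring
      · have : U = b := min_eq_right h
        rw [this]; ring
    have hpos : 0 < U * (1 - a - b + U) := by
      rcases le_total a b with h | h
      · have : U = a := min_eq_left h
        rw [this]; nlinarith
      · have : U = b := min_eq_right h
        rw [this]; nlinarith
    have hz : θ * ((a - U) * (b - U)) = 0 := by rw [hzero]; ring
    simp only [hf]; linarith
  obtain ⟨t, htmem, hft⟩ := intermediate_value_Ioo hLU.le hcont ⟨hfL, hfU⟩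
  obtain ⟨htL, htU⟩ := htmem
  have ht0 : 0 < t := lt_of_le_of_lt hL0 htL
  have hta : t < a := lt_of_lt_of_le htU hUa
  have htb : t < b := lt_of_lt_of_le htU hUb
  have ht00 : 0 < 1 - a - b + t := by linarith
  have heq : t * (1 - a - b + t) = θ * ((a - t) * (b - t)) := by
    have : f t = 0 := hft
    simp only [hf] at this; linarith
  refine ⟨(1 - a - b + t, b - t, a - t, t), ?_, ?_⟩
  · dsimp only
    refine ⟨ht00, by linarith, by linarith, ht0, by ring, by ring, by ring, ?_⟩
    rw [div_eq_iff (mul_pos (by linarith : (0:ℝ) < a - t) (by linarith : (0:ℝ) < b - t)).ne']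
    linarith [heq]
  · rintro ⟨q00, q01, q10, q11⟩ ⟨h1, h2, h3, h4, hsum, hma, hmb, hratio⟩
    simp only at *
    have hq00 : q00 = 1 - a - b + q11 := by linarith
    have hq01 : q01 = b - q11 := by linarith
    have hq10 : q10 = a - q11 := by linarith
    rw [div_eq_iff (mul_pos h3 h2).ne'] at hratio
    have heq2 : q11 * (1 - a - b + q11) = θ * ((a - q11) * (b - q11)) := by
      rw [← hq00, ← hq01, ← hq10]; linarith [hratio]
    have key : (q11 - t) * ((q11 + t + 1 - a - b) + θ * ((a - q11) + (b - t))) = 0 := by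
      linear_combination heq2 - heq
    have hq11a : q11 < a := by linarith
    have hq11b : q11 < b := by linarith
    have hbracket : 0 < (q11 + t + 1 - a - b) + θ * ((a - q11) + (b - t)) := by
      have : 0 < θ * ((a - q11) + (b - t)) := mul_pos hθ (by linarith)
      linarith
    have hqt : q11 = t := by
      rcases mul_eq_zero.mp key with h | h
      · linarith
      · linarith
    rw [Prod.mk.injEq, Prod.mk.injEq, Prod.mk.injEq]
    exact ⟨by linarith, by linarith, by linarith, hqt⟩
end

section
/- Let 𝒳 be a nonempty finite type and let p, p̃ be strictly positive probability mass functions on {0,1} × 𝒳 × {0,1} (coordinates (z, x, y)). Suppose that (i) Σ_y p(z,x,y) = Σ_y p̃(z,x,y) for all z, x (same (Z,X)-marginal); (ii) Σ_z p(z,x,y) = Σ_z p̃(z,x,y) for all x, y (same (X,Y)-marginal, hence same conditional of Y given X); and (iii) for every x the conditional odds ratios agree: p(1,x,1)p(0,x,0)/(p(1,x,0)p(0,x,1)) = p̃(1,x,1)p̃(0,x,0)/(p̃(1,x,0)p̃(0,x,1)). Then p = p̃. That is, for binary Y and Z the triple consisting of the (Z,X)-marginal, the conditional distribution of Y given X,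 and the conditional odds ratio of Y and Z given X uniquely determines the joint distribution. -/
open scoped BigOperators

lemma key_or (a b c d a' b' c' d' : ℝ)
    (ha : 0 < a) (hb : 0 < b) (hc : 0 < c) (hd : 0 < d)
    (ha' : 0 < a') (hb' : 0 < b') (hc' : 0 < c') (hd' : 0 < d')
    (h1 : a + b = a' + b') (h2 : c + d = c' + d')
    (h3 : a + c = a' + c') (h4 : b + d = b' + d')
    (h5 : d * a * (c' * b') = d' * a' * (c * b)) :
    d = d' := by
  have ea : a' = a + d' - d := by linarith
  have eb : b' = b + d - d' := by linarith
  have ec : c' = c + d - d' := by linarith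
  subst ea eb ec
  have ht : (d - d') * (d * a * (b + d - d') + c * b * d' + a * c * (d + b)) = 0 := by
    linear_combination h5
  have hpos : 0 < d * a * (b + d - d') + c * b * d' + a * c * (d + b) := by
    have : 0 < b + d - d' := hb'
    positivity
  rcases mul_eq_zero.mp ht with h | h
  · linarith
  · linarith

/-- For binary `Z` and `Y`, a strictly positive joint pmf on `{0,1} × 𝒳 × {0,1}` is
uniquely determined by its `(Z,X)`-marginal, its `(X,Y)`-marginal, and the
conditional odds ratio of `Y` and `Z` given `X = x` for every `x`. -/
theorem frugal_parameterization_unique_binary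
    {𝒳 : Type*} [Fintype 𝒳] [Nonempty 𝒳]
    (p pt : Fin 2 × 𝒳 × Fin 2 → ℝ)
    (hp : ∀ w, 0 < p w) (hpt : ∀ w, 0 < pt w)
    (hp1 : ∑ w, p w = 1) (hpt1 : ∑ w, pt w = 1)
    (hZX : ∀ z x, ∑ y, p (z, x, y) = ∑ y, pt (z, x, y))
    (hXY : ∀ x y, ∑ z, p (z, x, y) = ∑ z, pt (z, x, y))
    (hOR : ∀ x,
      p (1, x, 1) * p (0, x, 0) / (p (1, x, 0) * p (0, x, 1)) =
        pt (1, x, 1) * pt (0, x, 0) / (pt (1, x, 0) * pt (0, x, 1))) :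
    p = pt := by
  have main : ∀ x : 𝒳, p (0, x, 0) = pt (0, x, 0) ∧ p (0, x, 1) = pt (0, x, 1) ∧
      p (1, x, 0) = pt (1, x, 0) ∧ p (1, x, 1) = pt (1, x, 1) := by
    intro x
    have h1 := hZX 0 x
    have h2 := hZX 1 x
    have h3 := hXY x 0
    have h4 := hXY x 1
    simp only [Fin.sum_univ_two] at h1 h2 h3 h4
    have h5' := hOR x
    have hden : p (1, x, 0) * p (0, x, 1) ≠ 0 := ne_of_gt (mul_pos (hp _) (hp _))
    have hden' : pt (1, x, 0) * pt (0, x, 1) ≠ 0 := ne_of_gt (mul_pos (hpt _) (hpt _))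
    rw [div_eq_div_iff hden hden'] at h5'
    have h5 : p (1, x, 1) * p (0, x, 0) * (pt (1, x, 0) * pt (0, x, 1)) =
        pt (1, x, 1) * pt (0, x, 0) * (p (1, x, 0) * p (0, x, 1)) := h5'
    have hd := key_or (p (0,x,0)) (p (0,x,1)) (p (1,x,0)) (p (1,x,1))
      (pt (0,x,0)) (pt (0,x,1)) (pt (1,x,0)) (pt (1,x,1))
      (hp _) (hp _) (hp _) (hp _) (hpt _) (hpt _) (hpt _) (hpt _)
      h1 h2 h3 h4 h5
    refine ⟨by linarith, by linarith, by linarith, hd⟩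
  funext w
  obtain ⟨z, x, y⟩ := w
  obtain ⟨e1, e2, e3, e4⟩ := main x
  fin_cases z <;> fin_cases y <;> assumption
end

section
/- Let c₀, c₁, c₂, c₃, c₄ be real numbers with c₂ ≠ 0 and c₄ ≠ 0. Then the set {x ∈ ℝ : c₁·x + c₂·expit(c₃ + c₄·x) = c₀} contains at most 3 elements, where expit(t) = 1/(1 + exp(−t)) is the standard logistic function. -/
/-! With `σ` the logistic function, the derivative of `x ↦ c₁ x + c₂ σ(c₃ + c₄ x)` is
`c₁ + c₂ c₄ σ'(c₃ + c₄ x)`, where `σ' = σ (1 - σ)`. Because `σ(-t) = 1 - σ(t)`, the identity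
`σ'(a) = σ'(b)` forces `b = ±a`, so the derivative has at most two zeros, and Rolle's theorem
then allows at most three solutions of any equation `f x = c₀`. -/

open Set

namespace Real

theorem sigmoid_mul_one_sub_eq_iff {a b : ℝ} :
    sigmoid a * (1 - sigmoid a) = sigmoid b * (1 - sigmoid b) ↔ b = a ∨ b = -a := by
  rw [← sigmoid_inj (a := b) (b := a), ← sigmoid_inj (a := b) (b := -a), sigmoid_neg]
  constructor
  · intro h
    have hprod : (sigmoid b - sigmoid a) * (sigmoid b - (1 - sigmoid a)) = 0 := by
      linear_combination h
    exact (mul_eq_zero.mp hprod).imp sub_eq_zero.mp sub_eq_zero.mp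
  · rintro (h | h)
    · rw [h]
    · rw [h]; ring

theorem encard_setOf_sigmoid_mul_one_sub_eq_le_two (v : ℝ) :
    {t | sigmoid t * (1 - sigmoid t) = v}.encard ≤ 2 := by
  rcases eq_empty_or_nonempty {t | sigmoid t * (1 - sigmoid t) = v} with h | ⟨a, ha⟩
  · simp [h]
  calc _ ≤ ({a, -a} : Set ℝ).encard :=
        encard_le_encard fun t ht => sigmoid_mul_one_sub_eq_iff.mp (ha.trans ht.symm)
    _ ≤ ({-a} : Set ℝ).encard + 1 := encard_insert_le _ _
    _ = 2 := by rw [encard_singleton]; rfl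

end Real

section Rolle

variable {f f' : ℝ → ℝ}

theorem Finset.card_le_encard_setOf_deriv_eq_zero_Iio_add_one {c : ℝ}
    (hf : ∀ x, HasDerivAt f (f' x) x) (s : Finset ℝ) :
    (∀ x ∈ s, f x = c) → ∀ b, (∀ x ∈ s, x ≤ b) →
      (s.card : ℕ∞) ≤ ({x | f' x = 0} ∩ Set.Iio b).encard + 1 := by
  classical
  induction s using Finset.induction_on_max with
  | empty => simp
  | insert a s has ih =>
    intro hc b hb
    rw [Finset.card_insert_of_notMem fun h => (has a h).false, Nat.cast_succ]
    gcongr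
    rcases s.eq_empty_or_nonempty with rfl | hne
    · simp
    set m := s.max' hne
    have hma : m < a := has m (s.max'_mem hne)
    obtain ⟨z, hz, hz0⟩ := exists_hasDerivAt_eq_zero hma
      (continuous_iff_continuousAt.mpr fun x => (hf x).continuousAt).continuousOn
      ((hc m (Finset.mem_insert_of_mem (s.max'_mem hne))).trans (hc a (s.mem_insert_self a)).symm)
      fun x _ => hf x
    calc (s.card : ℕ∞)
        ≤ ({x | f' x = 0} ∩ Set.Iio m).encard + 1 :=
          ih (fun x hx => hc x (Finset.mem_insert_of_mem hx)) m fun x hx => s.le_max' x hx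
      _ = (insert z ({x | f' x = 0} ∩ Set.Iio m)).encard := by
          rw [encard_insert_of_notMem fun h => h.2.not_gt hz.1]
      _ ≤ ({x | f' x = 0} ∩ Set.Iio b).encard := by
          have hab := hb a (s.mem_insert_self a)
          refine encard_le_encard (Set.insert_subset_iff.mpr ⟨⟨hz0, hz.2.trans_le hab⟩, ?_⟩)
          exact Set.inter_subset_inter_right _ fun x (hx : x < m) => hx.trans (hma.trans_le hab)

theorem encard_setOf_eq_le_encard_setOf_deriv_eq_zero_add_one
    (hf : ∀ x, HasDerivAt f (f' x) x) (c : ℝ) :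
    {x | f x = c}.encard ≤ {x | f' x = 0}.encard + 1 := by
  by_contra! h
  have hZ : {x | f' x = 0}.encard + 1 ≠ ⊤ := h.ne_top
  obtain ⟨t, hts, ht⟩ := exists_subset_encard_eq (Order.add_one_le_of_lt h)
  have htf : t.Finite := by
    rw [← encard_ne_top_iff, ht]
    exact WithTop.add_ne_top.mpr ⟨hZ, ENat.one_ne_top⟩
  obtain ⟨b, hb⟩ := htf.toFinset.bddAbove
  have hcard := htf.toFinset.card_le_encard_setOf_deriv_eq_zero_Iio_add_one hf
    (fun x hx => hts (htf.mem_toFinset.mp hx)) b hb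
  rw [← htf.encard_eq_coe_toFinset_card, ht] at hcard
  refine (ENat.add_one_le_iff hZ).mp (hcard.trans ?_) |>.false
  gcongr
  exact inter_subset_left

end Rolle

open Real

theorem hasDerivAt_linear_add_sigmoid_affine (c₁ c₂ c₃ c₄ x : ℝ) :
    HasDerivAt (fun x => c₁ * x + c₂ * sigmoid (c₃ + c₄ * x))
      (c₁ + c₂ * c₄ * (sigmoid (c₃ + c₄ * x) * (1 - sigmoid (c₃ + c₄ * x)))) x := by
  have hinner : HasDerivAt (fun x => c₃ + c₄ * x) c₄ x := by
    simpa using ((hasDerivAt_id x).const_mul c₄).const_add c₃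
  have hlin : HasDerivAt (fun x => c₁ * x) c₁ x := by
    simpa using (hasDerivAt_id x).const_mul c₁
  have hσ : HasDerivAt (fun x => sigmoid (c₃ + c₄ * x))
      (sigmoid (c₃ + c₄ * x) * (1 - sigmoid (c₃ + c₄ * x)) * c₄) x :=
    (hasDerivAt_sigmoid _).comp x hinner
  exact (hlin.add (hσ.const_mul c₂)).congr_deriv (by ring)

theorem encard_setOf_linear_add_sigmoid_affine_deriv_eq_zero_le_two
    {c₂ c₄ : ℝ} (c₁ c₃ : ℝ) (hc₂ : c₂ ≠ 0) (hc₄ : c₄ ≠ 0) :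
    {x | c₁ + c₂ * c₄ * (sigmoid (c₃ + c₄ * x) * (1 - sigmoid (c₃ + c₄ * x))) = 0}.encard
      ≤ 2 := by
  have hpre : {x | c₁ + c₂ * c₄ * (sigmoid (c₃ + c₄ * x) * (1 - sigmoid (c₃ + c₄ * x))) = 0} =
      (fun x => c₃ + c₄ * x) ⁻¹' {t | sigmoid t * (1 - sigmoid t) = -c₁ / (c₂ * c₄)} := by
    ext x
    simp only [mem_ofPred_eq, mem_preimage, eq_div_iff (mul_ne_zero hc₂ hc₄)]
    constructor <;> intro h <;> linarith
  have hbij : Function.Bijective fun x => c₃ + c₄ * x :=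
    ⟨fun x y h => by simpa [hc₄] using h, fun t => ⟨(t - c₃) / c₄, by field_simp; ring⟩⟩
  rw [hpre, encard_preimage_of_bijective hbij]
  exact encard_setOf_sigmoid_mul_one_sub_eq_le_two _

/-- A linear function plus a nonzero multiple of a nondegenerate logistic (expit)
function takes any given value at most 3 times: the solution set of
`c₁·x + c₂·expit(c₃ + c₄·x) = c₀` has at most 3 elements when `c₂ ≠ 0` and `c₄ ≠ 0`. -/
theorem linear_plus_expit_level_set_encard_le_three
    (c₀ c₁ c₂ c₃ c₄ : ℝ) (hc₂ : c₂ ≠ 0) (hc₄ : c₄ ≠ 0) :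
    {x : ℝ | c₁ * x + c₂ * (1 / (1 + Real.exp (-(c₃ + c₄ * x)))) = c₀}.encard ≤ 3 := by
  simp only [one_div, ← sigmoid_def]
  calc _ ≤ {x | c₁ + c₂ * c₄ * (sigmoid (c₃ + c₄ * x) * (1 - sigmoid (c₃ + c₄ * x))) = 0}.encard
          + 1 :=
        encard_setOf_eq_le_encard_setOf_deriv_eq_zero_add_one
          (hasDerivAt_linear_add_sigmoid_affine c₁ c₂ c₃ c₄) c₀
    _ ≤ 2 + 1 := by
        gcongr
        exact encard_setOf_linear_add_sigmoid_affine_deriv_eq_zero_le_two c₁ c₃ hc₂ hc₄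
    _ = 3 := rfl
end

section
/- Let β₁, β₂, θ₀, θ₁ be real numbers and suppose there exist four pairwise distinct reals a₁, a₂, a₃, a₄ and a constant c such that β₁·aᵢ + β₂·expit(θ₀ + θ₁·aᵢ) = c for i = 1, 2, 3, 4. Then β₁ = 0 and moreover θ₁ = 0 or β₂ = 0. (This is the g-null paradox: the mean E[Y | do(a,b)] = β₀ + β₁a + β₃b + β₂·expit(θ₀ + θ₁a) of the linear-logistic structural model can be independent of a treatment a taking at least four distinct values only on the singular submodel where β₁ = 0 and either θ₁ = 0 or β₂ = 0.) -/
/-! With `σ` the sigmoid and `g x = β₁ x + β₂ σ(θ₀ + θ₁ x)`, we have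
`g'' x = β₂ θ₁² σ'' (θ₀ + θ₁ x)` and `σ'' = σ (1 - σ) (1 - 2σ)` vanishes only at `0`.
If `θ₁ β₂ ≠ 0`, then `g''` has at most one zero, whereas by Rolle's theorem a function taking the
same value at four distinct points has a second derivative with two distinct zeros. Hence
`θ₁ = 0` or `β₂ = 0`, so `g` is `β₁ x` plus a constant, and `β₁ = 0`. -/

open Real Function

theorem exists_strictMono_deriv_eq_zero {f f' : ℝ → ℝ} (hf : ∀ x, HasDerivAt f (f' x) x)
    {n : ℕ} {a : Fin (n + 1) → ℝ} (ha : StrictMono a) {y : ℝ} (hfa : ∀ i, f (a i) = y) :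
    ∃ c : Fin n → ℝ, StrictMono c ∧ ∀ i, f' (c i) = 0 := by
  have hRolle : ∀ i : Fin n, ∃ x ∈ Set.Ioo (a i.castSucc) (a i.succ), f' x = 0 := fun i =>
    exists_hasDerivAt_eq_zero (ha i.castSucc_lt_succ)
      (fun x _ => (hf x).continuousAt.continuousWithinAt) (by rw [hfa, hfa]) (fun x _ => hf x)
  choose c hc hc0 using hRolle
  refine ⟨c, fun i j hij => ?_, hc0⟩
  calc c i < a i.succ := (hc i).2
    _ ≤ a j.castSucc := ha.monotone (Fin.succ_le_castSucc_iff.2 hij)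
    _ < c j := (hc j).1

theorem exists_injective_deriv_eq_zero {f f' : ℝ → ℝ} (hf : ∀ x, HasDerivAt f (f' x) x)
    {n : ℕ} {a : Fin (n + 1) → ℝ} (ha : Injective a) {y : ℝ} (hfa : ∀ i, f (a i) = y) :
    ∃ c : Fin n → ℝ, Injective c ∧ ∀ i, f' (c i) = 0 := by
  have hsorted : StrictMono (a ∘ Tuple.sort a) :=
    (Tuple.monotone_sort a).strictMono_of_injective (ha.comp (Tuple.sort a).injective)
  obtain ⟨c, hc, hc0⟩ := exists_strictMono_deriv_eq_zero hf hsorted fun i => hfa _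
  exact ⟨c, hc.injective, hc0⟩

namespace Real

theorem hasDerivAt_sigmoid_mul_one_sub_sigmoid (x : ℝ) :
    HasDerivAt (fun x => sigmoid x * (1 - sigmoid x))
      (sigmoid x * (1 - sigmoid x) * (1 - 2 * sigmoid x)) x :=
  ((hasDerivAt_sigmoid x).mul ((hasDerivAt_sigmoid x).const_sub 1)).congr_deriv (by ring)

theorem sigmoid_mul_one_sub_sigmoid_mul_one_sub_two_mul_sigmoid_eq_zero_iff {x : ℝ} :
    sigmoid x * (1 - sigmoid x) * (1 - 2 * sigmoid x) = 0 ↔ x = 0 := by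
  simp only [mul_eq_zero, (sigmoid_pos x).ne', sub_eq_zero, (sigmoid_lt_one x).ne', false_or]
  rw [← sigmoid_inj (b := 0), sigmoid_zero]
  constructor <;> intro h <;> linarith

end Real

section LinearLogistic

variable (β₁ β₂ θ₀ θ₁ : ℝ)

theorem hasDerivAt_comp_affine {h h' : ℝ → ℝ} (hh : ∀ t, HasDerivAt h (h' t) t) (x : ℝ) :
    HasDerivAt (fun x => h (θ₀ + θ₁ * x)) (θ₁ * h' (θ₀ + θ₁ * x)) x := by
  have haffine : HasDerivAt (fun x => θ₀ + θ₁ * x) θ₁ x := by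
    simpa using ((hasDerivAt_id x).const_mul θ₁).const_add θ₀
  exact ((hh _).comp x haffine).congr_deriv (mul_comm _ _)

theorem hasDerivAt_linear_add_sigmoid (x : ℝ) :
    HasDerivAt (fun x => β₁ * x + β₂ * sigmoid (θ₀ + θ₁ * x))
      (β₁ + β₂ * θ₁ * (sigmoid (θ₀ + θ₁ * x) * (1 - sigmoid (θ₀ + θ₁ * x)))) x :=
  (((hasDerivAt_id x).const_mul β₁).add
    ((hasDerivAt_comp_affine θ₀ θ₁ hasDerivAt_sigmoid x).const_mul β₂)).congr_deriv (by ring)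

theorem hasDerivAt_const_add_sigmoid_mul_one_sub_sigmoid (x : ℝ) :
    HasDerivAt
      (fun x => β₁ + β₂ * θ₁ * (sigmoid (θ₀ + θ₁ * x) * (1 - sigmoid (θ₀ + θ₁ * x))))
      (β₂ * θ₁ ^ 2 * (sigmoid (θ₀ + θ₁ * x) * (1 - sigmoid (θ₀ + θ₁ * x)) *
        (1 - 2 * sigmoid (θ₀ + θ₁ * x)))) x :=
  (((hasDerivAt_comp_affine θ₀ θ₁ hasDerivAt_sigmoid_mul_one_sub_sigmoid x).const_mul
    (β₂ * θ₁)).const_add β₁).congr_deriv (by ring)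

end LinearLogistic

/-- The g-null paradox: if `β₁·a + β₂·expit(θ₀ + θ₁·a)` takes the same value `c` at
four pairwise distinct points `a₁, a₂, a₃, a₄`, then `β₁ = 0` and moreover `θ₁ = 0`
or `β₂ = 0`. -/
theorem g_null_paradox
    (β₁ β₂ θ₀ θ₁ : ℝ)
    (h : ∃ (a : Fin 4 → ℝ) (c : ℝ), Function.Injective a ∧
      ∀ i, β₁ * a i + β₂ * (1 / (1 + Real.exp (-(θ₀ + θ₁ * a i)))) = c) :
    β₁ = 0 ∧ (θ₁ = 0 ∨ β₂ = 0) := by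
  obtain ⟨a, c, ha, hac⟩ := h
  simp only [one_div, ← sigmoid_def] at hac
  have hθβ : θ₁ = 0 ∨ β₂ = 0 := by
    by_contra! ⟨hθ, hβ⟩
    obtain ⟨b, hb, hb0⟩ :=
      exists_injective_deriv_eq_zero (hasDerivAt_linear_add_sigmoid β₁ β₂ θ₀ θ₁) ha hac
    obtain ⟨d, hd, hd0⟩ := exists_injective_deriv_eq_zero
      (hasDerivAt_const_add_sigmoid_mul_one_sub_sigmoid β₁ β₂ θ₀ θ₁) hb hb0
    have hinflection : ∀ i, θ₀ + θ₁ * d i = 0 := fun i =>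
      sigmoid_mul_one_sub_sigmoid_mul_one_sub_two_mul_sigmoid_eq_zero_iff.1
        ((mul_eq_zero.1 (hd0 i)).resolve_left (mul_ne_zero hβ (pow_ne_zero 2 hθ)))
    have hd01 : θ₁ * d 0 = θ₁ * d 1 := by linarith [hinflection 0, hinflection 1]
    exact absurd (hd (mul_left_cancel₀ hθ hd01)) (by decide)
  refine ⟨?_, hθβ⟩
  have hconst : ∀ i, β₂ * sigmoid (θ₀ + θ₁ * a i) = β₂ * sigmoid θ₀ := by
    intro i
    rcases hθβ with h | h <;> simp [h]
  by_contra hβ₁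
  have hlinear : β₁ * a 0 = β₁ * a 1 := by linarith [hac 0, hac 1, hconst 0, hconst 1]
  exact absurd (ha (mul_left_cancel₀ hβ₁ hlinear)) (by decide)
end

section
/- Let ν be a σ-finite measure on a measurable space 𝒳, and let p, q : 𝒳 → [0,∞) be measurable functions with ∫ p dν = ∫ q dν = 1. Suppose M > 0 satisfies p(x) ≤ M·q(x) for ν-almost every x. Let Q be the measure with density q with respect to ν, let λ be Lebesgue measure on [0,1], and let A = {(x,u) ∈ 𝒳 × [0,1] : M·u·q(x) ≤ p(x)} be the acceptance region. Then (Q ⊗ λ)(A) = 1/M, and for every measurable set B ⊆ 𝒳, (Q ⊗ λ)((B × [0,1]) ∩ A) = (1/M)·∫_B p dν. Consequently the conditional distribution of the first coordinate given acceptance is the measure with density p: (Q ⊗ λ)((B × [0,1]) ∩ A) / (Q ⊗ λ)(A) = ∫_B p dν. (Correctness of rejection sampling.) -/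
/-!
Integrate out `u` first (Tonelli). At a point with `q x ∈ (0, ∞)` the accepted `u` form the
interval `[0, p x / (M q x)]`, which lies in `[0, 1]` because `p ≤ M q`; weighted by the
proposal density `q x` it contributes `p x / M`. Hence the acceptance measure of `B × [0,1]`
is `(1/M) ∫_B p`, which is `1/M` for `B = 𝒳`, and the ratio is `∫_B p`.
-/

open MeasureTheory Set
open scoped ENNReal

lemma volume_restrict_Icc_zero_one_Iic (t : ℝ) :
    volume.restrict (Icc (0 : ℝ) 1) (Iic t) = ENNReal.ofReal (min 1 t) := by
  rw [Measure.restrict_apply measurableSet_Iic, inter_comm, ← Ici_inter_Iic, inter_assoc,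
    Iic_inter_Iic, Ici_inter_Iic, Real.volume_Icc, sub_zero]

lemma setOf_ofReal_mul_mul_le_eq_Iic {M : ℝ} (hM : 0 < M) {a b : ℝ≥0∞}
    (ha : a ≠ ∞) (hb₀ : b ≠ 0) (hb : b ≠ ∞) :
    {u : ℝ | ENNReal.ofReal (M * u) * b ≤ a} = Iic ((a / b).toReal / M) := by
  ext u
  rw [mem_ofPred_eq, mem_Iic, ← ENNReal.le_div_iff_mul_le (Or.inl hb₀) (Or.inl hb),
    ENNReal.ofReal_le_iff_le_toReal (ENNReal.div_ne_top ha hb₀), le_div_iff₀ hM, mul_comm]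

lemma mul_volume_acceptance_slice {M : ℝ} (hM : 0 < M) {a b : ℝ≥0∞}
    (hab : a ≤ ENNReal.ofReal M * b) (hb : b ≠ ∞) :
    b * volume.restrict (Icc (0 : ℝ) 1) {u : ℝ | ENNReal.ofReal (M * u) * b ≤ a}
      = ENNReal.ofReal (1 / M) * a := by
  rcases eq_or_ne b 0 with rfl | hb₀
  · simp [(by simpa using hab : a = 0)]
  have ha : a ≠ ∞ := ne_top_of_le_ne_top (by finiteness) hab
  have hratio : (a / b).toReal / M ≤ 1 := by
    rw [div_le_one hM]
    exact ENNReal.toReal_le_of_le_ofReal hM.le (ENNReal.div_le_of_le_mul hab)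
  rw [setOf_ofReal_mul_mul_le_eq_Iic hM ha hb₀ hb, volume_restrict_Icc_zero_one_Iic,
    min_eq_right hratio, div_eq_mul_one_div, ENNReal.ofReal_mul ENNReal.toReal_nonneg,
    ENNReal.ofReal_toReal (ENNReal.div_ne_top ha hb₀), ← mul_assoc,
    ENNReal.mul_div_cancel hb₀ hb, mul_comm]

lemma MeasureTheory.Measure.prod_prod_univ_inter_apply {α β : Type*} [MeasurableSpace α] [MeasurableSpace β]
    (μ : Measure α) (ν : Measure β) [SFinite ν] {B : Set α} {s : Set (α × β)}
    (hB : MeasurableSet B) (hs : MeasurableSet s) :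
    μ.prod ν ((B ×ˢ univ) ∩ s) = ∫⁻ x in B, ν (Prod.mk x ⁻¹' s) ∂μ := by
  rw [Measure.prod_apply ((hB.prod MeasurableSet.univ).inter hs), ← lintegral_indicator hB]
  congr 1 with x
  by_cases hx : x ∈ B <;> simp [hx]

def acceptanceRegion {X : Type*} (M : ℝ) (p q : X → ℝ≥0∞) : Set (X × ℝ) :=
  {xu | ENNReal.ofReal (M * xu.2) * q xu.1 ≤ p xu.1}

section

variable {X : Type*} [MeasurableSpace X] {ν : Measure X} {p q : X → ℝ≥0∞} {M : ℝ}

lemma measurableSet_acceptanceRegion (hp : Measurable p) (hq : Measurable q) :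
    MeasurableSet (acceptanceRegion M p q) :=
  measurableSet_le (by fun_prop) (by fun_prop)

lemma withDensity_prod_acceptanceRegion (hp : Measurable p) (hq : Measurable q)
    (hq_lt_top : ∀ᵐ x ∂ν, q x < ∞) (hM : 0 < M) (hdom : ∀ᵐ x ∂ν, p x ≤ ENNReal.ofReal M * q x)
    {B : Set X} (hB : MeasurableSet B) :
    (ν.withDensity q).prod (volume.restrict (Icc (0 : ℝ) 1))
        ((B ×ˢ univ) ∩ acceptanceRegion M p q)
      = ENNReal.ofReal (1 / M) * ∫⁻ x in B, p x ∂ν := by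
  rw [Measure.prod_prod_univ_inter_apply _ _ hB (measurableSet_acceptanceRegion hp hq),
    setLIntegral_withDensity_eq_setLIntegral_mul_non_measurable _ hq _ hB
      (ae_restrict_of_ae hq_lt_top), ← lintegral_const_mul' _ _ ENNReal.ofReal_ne_top]
  refine setLIntegral_congr_fun_ae hB ?_
  filter_upwards [hdom, hq_lt_top] with x hx hx_lt_top _
  exact mul_volume_acceptance_slice hM hx hx_lt_top.ne

end

theorem rejection_sampling_correct_general
    {𝒳 : Type*} [MeasurableSpace 𝒳] (ν : Measure 𝒳)
    (p q : 𝒳 → ℝ≥0∞) (hp : Measurable p) (hq : Measurable q)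
    (hp1 : ∫⁻ x, p x ∂ν = 1) (hq1 : ∫⁻ x, q x ∂ν = 1)
    (M : ℝ) (hM : 0 < M)
    (hdom : ∀ᵐ x ∂ν, p x ≤ ENNReal.ofReal M * q x)
    (Q : Measure 𝒳) (hQ : Q = ν.withDensity q)
    (lam : Measure ℝ) (hlam : lam = volume.restrict (Set.Icc (0 : ℝ) 1))
    (A : Set (𝒳 × ℝ))
    (hA : A = {xu : 𝒳 × ℝ | ENNReal.ofReal (M * xu.2) * q xu.1 ≤ p xu.1}) :
    (Q.prod lam) A = ENNReal.ofReal (1 / M) ∧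
    (∀ B : Set 𝒳, MeasurableSet B →
      (Q.prod lam) ((B ×ˢ (Set.univ : Set ℝ)) ∩ A)
        = ENNReal.ofReal (1 / M) * ∫⁻ x in B, p x ∂ν) ∧
    (∀ B : Set 𝒳, MeasurableSet B →
      (Q.prod lam) ((B ×ˢ (Set.univ : Set ℝ)) ∩ A) / (Q.prod lam) A
        = ∫⁻ x in B, p x ∂ν) := by
  have hq_lt_top : ∀ᵐ x ∂ν, q x < ∞ := ae_lt_top hq (by simp [hq1])
  have hacc (B : Set 𝒳) (hB : MeasurableSet B) :
      (Q.prod lam) ((B ×ˢ univ) ∩ A) = ENNReal.ofReal (1 / M) * ∫⁻ x in B, p x ∂ν := by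
    subst hQ hlam hA
    exact withDensity_prod_acceptanceRegion hp hq hq_lt_top hM hdom hB
  have htotal : (Q.prod lam) A = ENNReal.ofReal (1 / M) := by
    simpa [hp1] using hacc univ MeasurableSet.univ
  refine ⟨htotal, hacc, fun B hB => ?_⟩
  rw [hacc B hB, htotal, mul_comm, ENNReal.mul_div_cancel_right (by simpa using hM)
    ENNReal.ofReal_ne_top]

/-- Correctness of rejection sampling: if `p ≤ M·q` (ν-a.e.) for densities `p`, `q`
integrating to one against a σ-finite measure `ν`, `Q` is the measure with density `q`,
`lam` is Lebesgue measure on `[0,1]`, and `A = {(x,u) : M·u·q(x) ≤ p(x)}` is the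
acceptance region, then `(Q ⊗ lam)(A) = 1/M`, for every measurable `B` the acceptance
measure of `B × [0,1]` is `(1/M)·∫_B p dν`, and hence the conditional distribution of
the proposal given acceptance has density `p`. -/
theorem rejection_sampling_correct
    {𝒳 : Type*} [MeasurableSpace 𝒳] (ν : Measure 𝒳) [SigmaFinite ν]
    (p q : 𝒳 → ℝ≥0∞) (hp : Measurable p) (hq : Measurable q)
    (hp1 : ∫⁻ x, p x ∂ν = 1) (hq1 : ∫⁻ x, q x ∂ν = 1)
    (M : ℝ) (hM : 0 < M)
    (hdom : ∀ᵐ x ∂ν, p x ≤ ENNReal.ofReal M * q x)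
    (Q : Measure 𝒳) (hQ : Q = ν.withDensity q)
    (lam : Measure ℝ) (hlam : lam = volume.restrict (Set.Icc (0 : ℝ) 1))
    (A : Set (𝒳 × ℝ))
    (hA : A = {xu : 𝒳 × ℝ | ENNReal.ofReal (M * xu.2) * q xu.1 ≤ p xu.1}) :
    (Q.prod lam) A = ENNReal.ofReal (1 / M) ∧
    (∀ B : Set 𝒳, MeasurableSet B →
      (Q.prod lam) ((B ×ˢ (Set.univ : Set ℝ)) ∩ A)
        = ENNReal.ofReal (1 / M) * ∫⁻ x in B, p x ∂ν) ∧
    (∀ B : Set 𝒳, MeasurableSet B →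
      (Q.prod lam) ((B ×ˢ (Set.univ : Set ℝ)) ∩ A) / (Q.prod lam) A
        = ∫⁻ x in B, p x ∂ν) :=
  rejection_sampling_correct_general ν p q hp hq hp1 hq1 M hM hdom Q hQ lam hlam A hA
end

section
/- Let 𝒴 be a nonempty finite type with a distinguished baseline point y₀ ∈ 𝒴, let π ∈ (0,1), let m : 𝒴 → (0,∞) be a strictly positive probability mass function, and let R : 𝒴 → (0,∞) satisfy R(y₀) = 1. Then there exists a unique pair of strictly positive probability mass functions p₀, p₁ : 𝒴 → (0,∞) such that (1−π)·p₀(y) + π·p₁(y) = m(y) for all y, and the odds ratio condition p₁(y)·p₀(y₀) / (p₁(y₀)·p₀(y)) = R(y) holds for all y. That is, the marginal m, the weight π, and the odds-ratio contrast R form a full parameterization: the conditional outcome distributions under the two binary treatment levels are uniquely recovered. -/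
open scoped BigOperators

/-- The marginal `m`, the weight `π ∈ (0,1)` and the odds-ratio contrast `R` (relative
to a baseline point `y₀`, with `R(y₀) = 1`) form a full parameterization: there is a
unique pair of strictly positive pmfs `(p₀, p₁)` with mixture
`(1−π)p₀ + πp₁ = m` and odds ratios `p₁(y)p₀(y₀)/(p₁(y₀)p₀(y)) = R(y)`. -/
theorem odds_ratio_contrast_full_parameterization
    {𝒴 : Type*} [Fintype 𝒴] [Nonempty 𝒴] (y₀ : 𝒴)
    (π : ℝ) (hπ : π ∈ Set.Ioo (0 : ℝ) 1)
    (m : 𝒴 → ℝ) (hm : ∀ y, 0 < m y) (hm1 : ∑ y, m y = 1)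
    (R : 𝒴 → ℝ) (hR : ∀ y, 0 < R y) (hRy₀ : R y₀ = 1) :
    ∃! p : (𝒴 → ℝ) × (𝒴 → ℝ),
      (∀ y, 0 < p.1 y) ∧ (∑ y, p.1 y = 1) ∧
      (∀ y, 0 < p.2 y) ∧ (∑ y, p.2 y = 1) ∧
      (∀ y, (1 - π) * p.1 y + π * p.2 y = m y) ∧
      (∀ y, p.2 y * p.1 y₀ / (p.2 y₀ * p.1 y) = R y) := by
  obtain ⟨hπ0, hπ1⟩ := hπ
  have h1π : (0:ℝ) < 1 - π := by linarith
  set f : ℝ → ℝ := fun lam => ∑ y, m y / ((1 - π) + π * lam * R y) with hf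
  have hden : ∀ lam : ℝ, 0 ≤ lam → ∀ y, 0 < (1 - π) + π * lam * R y := by
    intro lam hlam y
    have : 0 ≤ π * lam * R y := mul_nonneg (mul_nonneg hπ0.le hlam) (hR y).le
    linarith
  -- f is strictly decreasing on [0,∞)
  have hanti : StrictAntiOn f (Set.Ici 0) := by
    intro a ha b hb hab
    apply Finset.sum_lt_sum_of_nonempty Finset.univ_nonempty
    intro y _
    apply div_lt_div_of_pos_left (hm y) (hden a ha y)
    nlinarith [mul_pos (mul_pos hπ0 (hR y)) (sub_pos.mpr hab)]
  set C : ℝ := ∑ y, m y / (π * R y) with hC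
  have hCpos : 0 < C := by
    apply Finset.sum_pos _ Finset.univ_nonempty
    intro y _
    exact div_pos (hm y) (mul_pos hπ0 (hR y))
  have hf0 : f 0 = 1 / (1 - π) := by
    simp only [hf, mul_zero, zero_mul, add_zero, ← Finset.sum_div, hm1]
  have hf0gt : 1 < f 0 := by
    rw [hf0]
    rw [lt_div_iff₀ h1π]
    linarith
  have hfC : f C ≤ 1 := by
    have step : ∀ y : 𝒴, m y / ((1 - π) + π * C * R y) ≤ (m y / (π * R y)) / C := by
      intro y
      have h1 : m y / ((1 - π) + π * C * R y) ≤ m y / (π * C * R y) := by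
        apply div_le_div_of_nonneg_left (hm y).le (mul_pos (mul_pos hπ0 hCpos) (hR y))
        linarith
      have h2 : m y / (π * C * R y) = (m y / (π * R y)) / C := by
        field_simp
      rw [h2] at h1
      exact h1
    calc f C ≤ ∑ y, (m y / (π * R y)) / C := Finset.sum_le_sum (fun y _ => step y)
      _ = C / C := by rw [← Finset.sum_div]
      _ = 1 := div_self hCpos.ne'
  -- IVT gives lam with f lam = 1
  have hcont : ContinuousOn f (Set.Icc 0 C) := by
    apply continuousOn_finset_sum
    intro y _
    apply ContinuousOn.div continuousOn_const
    · fun_prop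
    · intro x hx
      exact (hden x hx.1 y).ne'
  obtain ⟨lam, hlamIcc, hflam⟩ := intermediate_value_Icc' hCpos.le hcont
    ⟨hfC, hf0gt.le⟩
  have hlam0 : 0 < lam := by
    rcases lt_or_eq_of_le hlamIcc.1 with h | h
    · exact h
    · exfalso; rw [← h] at hflam; rw [hflam] at hf0gt; exact lt_irrefl 1 hf0gt
  -- the candidate solution
  set p₀ : 𝒴 → ℝ := fun y => m y / ((1 - π) + π * lam * R y) with hp₀
  set p₁ : 𝒴 → ℝ := fun y => lam * R y * p₀ y with hp₁
  have hp₀pos : ∀ y, 0 < p₀ y := fun y => div_pos (hm y) (hden lam hlam0.le y)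
  have hp₁pos : ∀ y, 0 < p₁ y := fun y => by
    have := hp₀pos y; have := hR y; positivity
  have hp₀sum : ∑ y, p₀ y = 1 := hflam
  have hmixp : ∀ y, (1 - π) * p₀ y + π * p₁ y = m y := by
    intro y
    have hd := (hden lam hlam0.le y).ne'
    simp only [hp₀, hp₁]
    field_simp
  have hp₁sum : ∑ y, p₁ y = 1 := by
    have h := Finset.sum_congr rfl (fun y (_ : y ∈ Finset.univ) => hmixp y)
    rw [hm1] at h
    rw [Finset.sum_add_distrib, ← Finset.mul_sum, ← Finset.mul_sum, hp₀sum] at h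
    have : π * ∑ y, p₁ y = π * 1 := by linarith
    exact mul_left_cancel₀ hπ0.ne' this
  have hoddsp : ∀ y, p₁ y * p₀ y₀ / (p₁ y₀ * p₀ y) = R y := by
    intro y
    have h0 := (hp₀pos y).ne'
    have h00 := (hp₀pos y₀).ne'
    simp only [hp₁, hRy₀]
    field_simp
  refine ⟨(p₀, p₁), ⟨hp₀pos, hp₀sum, hp₁pos, hp₁sum, hmixp, hoddsp⟩, ?_⟩
  rintro ⟨q₀, q₁⟩ ⟨hq₀pos, hq₀sum, hq₁pos, hq₁sum, hqmix, hqodds⟩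
  dsimp only at hq₀pos hq₀sum hq₁pos hq₁sum hqmix hqodds
  set μ : ℝ := q₁ y₀ / q₀ y₀ with hμ
  have hμpos : 0 < μ := div_pos (hq₁pos y₀) (hq₀pos y₀)
  have hq₁eq : ∀ y, q₁ y = μ * R y * q₀ y := by
    intro y
    have h := hqodds y
    have h1 := (hq₁pos y₀).ne'
    have h2 := (hq₀pos y).ne'
    have h3 := (hq₀pos y₀).ne'
    rw [div_eq_iff (mul_pos (hq₁pos y₀) (hq₀pos y)).ne'] at h
    rw [hμ]
    field_simp
    linear_combination h
  have hq₀eq : ∀ y, q₀ y = m y / ((1 - π) + π * μ * R y) := by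
    intro y
    have hd := (hden μ hμpos.le y).ne'
    have h := hqmix y
    rw [hq₁eq y] at h
    rw [eq_div_iff hd]
    linear_combination h
  have hfμ : f μ = 1 := by
    have : f μ = ∑ y, q₀ y := Finset.sum_congr rfl (fun y _ => (hq₀eq y).symm)
    rw [this, hq₀sum]
  have hμlam : μ = lam := by
    apply hanti.injOn (Set.mem_Ici.mpr hμpos.le) (Set.mem_Ici.mpr hlam0.le)
    rw [hfμ, hflam]
  have hq₀p : q₀ = p₀ := by
    funext y
    rw [hq₀eq y, hμlam, hp₀]
  have hq₁p : q₁ = p₁ := by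
    funext y
    rw [hq₁eq y, hμlam, hq₀p, hp₁]
  simp [hq₀p, hq₁p]
end
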